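/- For all real numbers p, q, r, s, if −4p + p² − 4q + 2pq − 2q² = −4r + r² − 4s + 2rs − 2s², −p − p²/2 − q²/2 = −r − r²/2 − s²/2, p² + q² = 1 and r² + s² = 1, then (p,q) = (r,s). In particular, the closing-equation system has no solution with (p,q) ≠ (r,s). -/
import Mathlib


/-- The closing-equation system for `X = (-4 + 2x - 4y, 4 - 2x - 2y)`, `Y = (-y, 1 + x)`. -/
def closingSys11 (p q r s : ℝ) : Prop :=
  -4 * p + p ^ 2 - 4 * q + 2 * p * q - 2 * q ^ 2 =
      -4 * r + r ^ 2 - 4 * s + 2 * r * s - 2 * s ^ 2 ∧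
    -p - p ^ 2 / 2 - q ^ 2 / 2 = -r - r ^ 2 / 2 - s ^ 2 / 2 ∧
    p ^ 2 + q ^ 2 = 1 ∧ r ^ 2 + s ^ 2 = 1

/-- Any solution of the closing-equation system has `(p,q) = (r,s)`; in particular there is
no solution with `(p,q) ≠ (r,s)`. -/
theorem closingSys11_no_solution :
    (∀ p q r s : ℝ, closingSys11 p q r s → (p, q) = (r, s)) ∧
    ¬∃ p q r s : ℝ, closingSys11 p q r s ∧ (p, q) ≠ (r, s) := by
  have main : ∀ p q r s : ℝ, closingSys11 p q r s → (p, q) = (r, s) := by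
    intro p q r s h
    obtain ⟨h1, h2, h3, h4⟩ := h
    have hpr : p = r := by nlinarith
    subst hpr
    have hq2 : q ^ 2 = s ^ 2 := by nlinarith
    have hp1 : p ≤ 1 := by nlinarith [sq_nonneg q, sq_nonneg p, sq_nonneg (p - 1)]
    have hqs : q = s := by
      have h5 : (q - s) * (2 * p - 4) = 0 := by nlinarith
      rcases mul_eq_zero.mp h5 with h | h
      · linarith
      · linarith
    simp [hqs]
  exact ⟨main, fun ⟨p, q, r, s, hsys, hne⟩ => hne (main p q r s hsys)⟩
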